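/- arXiv:2003.05769 — 6 statements merged into one kernel-verified Lean document; each statement's English description precedes it below -/
import Mathlib

section
/- Let μₙ, μ be probability measures on a Polish space X with μₙ → μ weakly, and let fₙ : X → ℝ be a uniformly bounded sequence of measurable functions (‖fₙ‖_∞ ≤ C for all n) that converges continuously to f, i.e., fₙ(xₙ) → f(x) whenever xₙ → x. Then ∫ fₙ dμₙ → ∫ f dμ. -/
/-!
Approximate `f` from below by continuous functions: the `k`-Lipschitz lower envelope
`h k x = inf {f n y + k * dist x y | n ≥ k, y ∈ X}` satisfies `h k ≤ f n` for `n ≥ k`, and continuous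
convergence makes `h k` converge pointwise to `flim`. Weak convergence handles each `h k`, dominated
convergence lets `k → ∞`, and this bounds `∫ f n ∂μ n` from below in the limit; applying the same
argument to `-f` gives the upper bound.
-/

open MeasureTheory Filter Topology Set

def TendstoContinuously {X Y : Type*} [TopologicalSpace X] [TopologicalSpace Y]
    (f : ℕ → X → Y) (g : X → Y) : Prop :=
  ∀ (x : X) (xs : ℕ → X), Tendsto xs atTop (𝓝 x) → Tendsto (fun n => f n (xs n)) atTop (𝓝 (g x))

namespace TendstoContinuously

variable {X Y : Type*} [TopologicalSpace X] [TopologicalSpace Y] {f : ℕ → X → Y} {g : X → Y}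

lemma neg [Neg Y] [ContinuousNeg Y] (hf : TendstoContinuously f g) :
    TendstoContinuously (fun n x => -f n x) (fun x => -g x) :=
  fun x xs hxs => (hf x xs hxs).neg

lemma tendsto_comp_strictMono (hf : TendstoContinuously f g) {ns : ℕ → ℕ} (hns : StrictMono ns)
    {x : X} {ys : ℕ → X} (hys : Tendsto ys atTop (𝓝 x)) :
    Tendsto (fun j => f (ns j) (ys j)) atTop (𝓝 (g x)) := by
  -- `ys j` placed at time `ns j`, and `x` at the times `ns` skips
  set z := Function.extend ns ys fun _ => x
  have hz : Tendsto z atTop (𝓝 x) := by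
    intro U hU
    obtain ⟨J, hJ⟩ := eventually_atTop.1 (hys hU)
    refine eventually_atTop.2 ⟨ns J, fun m hm => ?_⟩
    by_cases hrange : ∃ j, ns j = m
    · obtain ⟨j, rfl⟩ := hrange
      simpa only [z, hns.injective.extend_apply] using hJ j (hns.le_iff_le.1 hm)
    · simpa only [z, Function.extend_apply' _ _ _ hrange] using mem_of_mem_nhds hU
  have := (hf x z hz).comp hns.tendsto_atTop
  simpa only [Function.comp_def, z, hns.injective.extend_apply] using this

lemma tendsto_uncurry [FirstCountableTopology X] (hf : TendstoContinuously f g) (x : X) :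
    Tendsto (fun p : ℕ × X => f p.1 p.2) (atTop ×ˢ 𝓝 x) (𝓝 (g x)) := by
  refine tendsto_of_subseq_tendsto fun ps hps => ?_
  obtain ⟨hps₁, hps₂⟩ := tendsto_prod_iff'.1 hps
  obtain ⟨ms, hms, hps₁ms⟩ := strictMono_subseq_of_tendsto_atTop hps₁
  exact ⟨ms, hf.tendsto_comp_strictMono hps₁ms (hps₂.comp hms.tendsto_atTop)⟩

end TendstoContinuously

section LowerEnvelope

variable {X : Type*} [PseudoMetricSpace X] {f : ℕ → X → ℝ} {B : ℝ}

/-- The largest `k`-Lipschitz function lying below every `f n` with `n ≥ k` (when the `f n` are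
uniformly bounded below; otherwise the infimum takes the junk value `0`). -/
noncomputable def lowerEnvelope (f : ℕ → X → ℝ) (k : ℕ) (x : X) : ℝ :=
  ⨅ p : Ici k × X, f p.1 p.2 + k * dist x p.2

lemma bddBelow_lowerEnvelope (hB : ∀ n x, B ≤ f n x) (k : ℕ) (x : X) :
    BddBelow (range fun p : Ici k × X => f p.1 p.2 + k * dist x p.2) := by
  refine ⟨B, ?_⟩
  rintro _ ⟨p, rfl⟩
  exact le_add_of_le_of_nonneg (hB _ _) (by positivity)

lemma lowerEnvelope_le_add (hB : ∀ n x, B ≤ f n x) {k n : ℕ} (hkn : k ≤ n) (x y : X) :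
    lowerEnvelope f k x ≤ f n y + k * dist x y :=
  ciInf_le (bddBelow_lowerEnvelope hB k x) (⟨n, hkn⟩, y)

lemma lowerEnvelope_le (hB : ∀ n x, B ≤ f n x) {k n : ℕ} (hkn : k ≤ n) (x : X) :
    lowerEnvelope f k x ≤ f n x := by
  simpa using lowerEnvelope_le_add hB hkn x x

lemma le_lowerEnvelope {k : ℕ} {x : X} {a : ℝ} (h : ∀ n ≥ k, ∀ y, a ≤ f n y + k * dist x y) :
    a ≤ lowerEnvelope f k x :=
  have : Nonempty (Ici k × X) := ⟨(⟨k, self_mem_Ici⟩, x)⟩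
  le_ciInf fun p => h p.1 p.1.2 p.2

lemma lipschitzWith_lowerEnvelope (hB : ∀ n x, B ≤ f n x) (k : ℕ) :
    LipschitzWith k (lowerEnvelope f k) := by
  refine LipschitzWith.of_le_add_mul _ fun x x' => ?_
  rw [← sub_le_iff_le_add]
  refine le_lowerEnvelope fun n hn y => ?_
  rw [sub_le_iff_le_add]
  calc lowerEnvelope f k x ≤ f n y + k * dist x y := lowerEnvelope_le_add hB hn x y
    _ ≤ f n y + k * dist x' y + k * dist x x' := by
        rw [add_assoc, ← mul_add, add_comm (dist x' y)]
        gcongr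
        apply dist_triangle

lemma tendsto_lowerEnvelope (hB : ∀ n x, B ≤ f n x) {g : X → ℝ} (hf : TendstoContinuously f g)
    (x : X) : Tendsto (fun k => lowerEnvelope f k x) atTop (𝓝 (g x)) := by
  refine tendsto_order.2 ⟨fun a ha => ?_, fun b hb => ?_⟩
  · obtain ⟨a', haa', ha'⟩ := exists_between ha
    obtain ⟨⟨N, δ⟩, ⟨-, hδ⟩, hNδ⟩ := ((atTop_basis.prod Metric.nhds_basis_ball).eventually_iff).1
      ((hf.tendsto_uncurry x).eventually (lt_mem_nhds ha'))
    filter_upwards [eventually_ge_atTop N,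
      tendsto_natCast_atTop_atTop.eventually_ge_atTop ((a' - B) / δ)] with k hNk hk
    refine haa'.trans_le (le_lowerEnvelope fun n hn y => ?_)
    rcases lt_or_ge (dist y x) δ with hy | hy
    · exact (@hNδ (n, y) ⟨hNk.trans hn, hy⟩).le.trans (le_add_of_nonneg_right (by positivity))
    · calc a' ≤ B + k * δ := by linarith [(div_le_iff₀ hδ).1 hk]
        _ ≤ f n y + k * dist x y := by
          rw [dist_comm]
          gcongr
          exact hB n y
  · filter_upwards [(hf x (fun _ => x) tendsto_const_nhds).eventually (gt_mem_nhds hb)] with k hk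
    exact (lowerEnvelope_le hB le_rfl x).trans_lt hk

end LowerEnvelope

lemma integrable_of_abs_le {X : Type*} [MeasurableSpace X] {ν : Measure X} [IsFiniteMeasure ν]
    {φ : X → ℝ} (hφ : Measurable φ) {C : ℝ} (hC : ∀ x, |φ x| ≤ C) : Integrable φ ν :=
  .of_bound hφ.aestronglyMeasurable C (ae_of_all _ hC)

lemma eventually_lt_integral_of_tendstoContinuously
    {X : Type*} [PseudoMetricSpace X] [MeasurableSpace X] [OpensMeasurableSpace X]
    (μ : ℕ → Measure X) (μlim : Measure X) [∀ n, IsFiniteMeasure (μ n)] [IsFiniteMeasure μlim]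
    (hweak : ∀ g : X → ℝ, Continuous g → (∃ M, ∀ x, |g x| ≤ M) →
      Tendsto (fun n => ∫ x, g x ∂(μ n)) atTop (𝓝 (∫ x, g x ∂μlim)))
    {f : ℕ → X → ℝ} {flim : X → ℝ} (hmeas : ∀ n, Measurable (f n)) {C : ℝ}
    (hbdd : ∀ n x, |f n x| ≤ C) (hf : TendstoContinuously f flim)
    {a : ℝ} (ha : a < ∫ x, flim x ∂μlim) :
    ∀ᶠ n in atTop, a < ∫ x, f n x ∂(μ n) := by
  have hB : ∀ n x, -C ≤ f n x := fun n x => (abs_le.1 (hbdd n x)).1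
  have h_cont : ∀ k, Continuous (lowerEnvelope f k) := fun k =>
    (lipschitzWith_lowerEnvelope hB k).continuous
  have h_abs : ∀ k x, |lowerEnvelope f k x| ≤ C := fun k x =>
    abs_le.2 ⟨le_lowerEnvelope fun n _ y => le_add_of_le_of_nonneg (hB n y) (by positivity),
      (lowerEnvelope_le hB le_rfl x).trans (abs_le.1 (hbdd k x)).2⟩
  have h_dominated : Tendsto (fun k => ∫ x, lowerEnvelope f k x ∂μlim) atTop
      (𝓝 (∫ x, flim x ∂μlim)) :=
    tendsto_integral_of_dominated_convergence (fun _ => C)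
      (fun k => (h_cont k).aestronglyMeasurable) (integrable_const C)
      (fun k => ae_of_all _ (h_abs k)) (ae_of_all _ (tendsto_lowerEnvelope hB hf))
  obtain ⟨k, hk⟩ := (h_dominated.eventually (lt_mem_nhds ha)).exists
  filter_upwards [(hweak _ (h_cont k) ⟨C, h_abs k⟩).eventually (lt_mem_nhds hk),
    eventually_ge_atTop k] with n hn hkn
  refine hn.trans_le (integral_mono ?_ ?_ fun x => lowerEnvelope_le hB hkn x)
  · exact integrable_of_abs_le (h_cont k).measurable (h_abs k)
  · exact integrable_of_abs_le (hmeas n) (hbdd n)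

theorem stmt_0_general
    {X : Type*} [MetricSpace X] [MeasurableSpace X] [BorelSpace X]
    (μ : ℕ → Measure X) (μlim : Measure X)
    [∀ n, IsProbabilityMeasure (μ n)] [IsProbabilityMeasure μlim]
    (hweak : ∀ g : X → ℝ, Continuous g → (∃ M, ∀ x, |g x| ≤ M) →
      Tendsto (fun n => ∫ x, g x ∂(μ n)) atTop (𝓝 (∫ x, g x ∂μlim)))
    (f : ℕ → X → ℝ) (flim : X → ℝ)
    (hmeas : ∀ n, Measurable (f n))
    (C : ℝ) (hbdd : ∀ n x, |f n x| ≤ C)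
    (hcont : ∀ (x : X) (xs : ℕ → X), Tendsto xs atTop (𝓝 x) →
      Tendsto (fun n => f n (xs n)) atTop (𝓝 (flim x))) :
    Tendsto (fun n => ∫ x, f n x ∂(μ n)) atTop (𝓝 (∫ x, flim x ∂μlim)) := by
  have hf : TendstoContinuously f flim := hcont
  refine tendsto_order.2 ⟨fun a ha => ?_, fun b hb => ?_⟩
  · exact eventually_lt_integral_of_tendstoContinuously μ μlim hweak hmeas hbdd hf ha
  · have hneg := eventually_lt_integral_of_tendstoContinuously μ μlim hweak
      (f := fun n x => -f n x) (fun n => (hmeas n).neg)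
      (fun n x => (abs_neg (f n x)).trans_le (hbdd n x)) hf.neg
      (a := -b) (by rwa [integral_neg, neg_lt_neg_iff])
    filter_upwards [hneg] with n hn
    rwa [integral_neg, neg_lt_neg_iff] at hn

/-- generalized dominated convergence under weak convergence of
probability measures on a Polish space, with continuously convergent uniformly
bounded integrands. -/
theorem stmt_0
    {X : Type*} [MetricSpace X] [CompleteSpace X] [TopologicalSpace.SeparableSpace X]
    [MeasurableSpace X] [BorelSpace X]
    (μ : ℕ → Measure X) (μlim : Measure X)
    [∀ n, IsProbabilityMeasure (μ n)] [IsProbabilityMeasure μlim]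
    (hweak : ∀ g : X → ℝ, Continuous g → (∃ M, ∀ x, |g x| ≤ M) →
      Tendsto (fun n => ∫ x, g x ∂(μ n)) atTop (𝓝 (∫ x, g x ∂μlim)))
    (f : ℕ → X → ℝ) (flim : X → ℝ)
    (hmeas : ∀ n, Measurable (f n))
    (C : ℝ) (hbdd : ∀ n x, |f n x| ≤ C)
    (hcont : ∀ (x : X) (xs : ℕ → X), Tendsto xs atTop (𝓝 x) →
      Tendsto (fun n => f n (xs n)) atTop (𝓝 (flim x))) :
    Tendsto (fun n => ∫ x, f n x ∂(μ n)) atTop (𝓝 (∫ x, flim x ∂μlim)) :=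
  stmt_0_general μ μlim hweak f flim hmeas C hbdd hcont
end

section
/- Let μₙ, μ be probability measures on a measurable space X with μₙ → μ setwise (i.e., μₙ(A) → μ(A) for every measurable set A), and let fₙ : X → ℝ be a uniformly bounded sequence of measurable functions converging pointwise to f. Then ∫ fₙ dμₙ → ∫ f dμ. -/
open MeasureTheory Filter Topology

/-!
For a bounded measurable `g ≥ 0`, the layer-cake formula `∫ g dρ = ∫₀^∞ ρ {g > t} dt` turns setwise
convergence `μₙ → μ` into `∫ g dμₙ → ∫ g dμ` by dominated convergence in `t`. For the moving
integrands, `|∫ fₙ dμₙ - ∫ f dμₙ|` is at most `∫ Hₖ dμₙ` for `n ≥ k`, where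
`Hₖ = supₘ |f_{k+m} - f|`; this tends to `∫ Hₖ dμ` as `n → ∞`, which tends to `0` as `k → ∞` by
dominated convergence for the single measure `μ`.
-/

lemma abs_le_iSup_abs_add {u : ℕ → ℝ} {B : ℝ} (hu : ∀ m, |u m| ≤ B) {K n : ℕ} (hKn : K ≤ n) :
    |u n| ≤ ⨆ m, |u (K + m)| := by
  obtain ⟨m, rfl⟩ := Nat.exists_eq_add_of_le hKn
  exact le_ciSup (f := fun m => |u (K + m)|) ⟨B, by rintro _ ⟨m, rfl⟩; exact hu _⟩ m

lemma tendsto_iSup_abs_add_of_tendsto_zero {u : ℕ → ℝ} (hu : Tendsto u atTop (𝓝 0)) :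
    Tendsto (fun K => ⨆ m, |u (K + m)|) atTop (𝓝 0) := by
  refine tendsto_order.2 ⟨fun a ha => Eventually.of_forall fun K =>
    ha.trans_le (Real.iSup_nonneg fun m => abs_nonneg _), fun ε hε => ?_⟩
  have hu_abs : Tendsto (|u ·|) atTop (𝓝 0) := by simpa using hu.abs
  obtain ⟨N, hN⟩ := eventually_atTop.1 (hu_abs.eventually (ge_mem_nhds (half_pos hε)))
  filter_upwards [eventually_ge_atTop N] with K hK
  exact (ciSup_le fun m => hN _ (by omega)).trans_lt (half_lt_self hε)

lemma tendsto_zero_of_le_of_tendsto_of_tendsto {a : ℕ → ℝ} {b : ℕ → ℕ → ℝ} {c : ℕ → ℝ}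
    (ha : ∀ n, 0 ≤ a n) (hab : ∀ K n, K ≤ n → a n ≤ b K n)
    (hb : ∀ K, Tendsto (b K) atTop (𝓝 (c K))) (hc : Tendsto c atTop (𝓝 0)) :
    Tendsto a atTop (𝓝 0) := by
  refine tendsto_order.2 ⟨fun a' ha' => Eventually.of_forall fun n => ha'.trans_le (ha n),
    fun ε hε => ?_⟩
  obtain ⟨K, hK⟩ := (hc.eventually (gt_mem_nhds hε)).exists
  filter_upwards [(hb K).eventually (gt_mem_nhds hK), eventually_ge_atTop K] with n hn hKn
  exact (hab K n hKn).trans_lt hn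

lemma Measurable.integrable_of_abs_le {X : Type*} [MeasurableSpace X] {ρ : Measure X}
    [IsFiniteMeasure ρ] {g : X → ℝ} (hg : Measurable g) {B : ℝ} (hB : ∀ x, |g x| ≤ B) :
    Integrable g ρ :=
  .of_bound hg.aestronglyMeasurable B (ae_of_all _ hB)

section SetwiseConvergence

variable {X ι : Type*} [MeasurableSpace X] {l : Filter ι} [l.IsCountablyGenerated]
  {μ : ι → Measure X} {ν : Measure X} [∀ i, IsFiniteMeasure (μ i)] [IsFiniteMeasure ν]

theorem tendsto_integral_of_tendsto_measureReal_of_nonneg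
    (hμ : ∀ A, MeasurableSet A → Tendsto (fun i => (μ i).real A) l (𝓝 (ν.real A)))
    {g : X → ℝ} (hg : Measurable g) (hg0 : 0 ≤ g) {B : ℝ} (hgB : ∀ x, g x ≤ B) :
    Tendsto (fun i => ∫ x, g x ∂μ i) l (𝓝 (∫ x, g x ∂ν)) := by
  have layercake (ρ : Measure X) [IsFiniteMeasure ρ] :
      ∫ x, g x ∂ρ = ∫ t in Set.Ioi 0, ρ.real {x | t < g x} :=
    (hg.integrable_of_abs_le fun x => (abs_of_nonneg (hg0 x)).trans_le (hgB x)
      ).integral_eq_integral_meas_lt (ae_of_all _ hg0)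
  simp only [layercake]
  refine tendsto_integral_filter_of_dominated_convergence
    ((Set.Ioc 0 B).indicator fun _ => ν.real Set.univ + 1) ?_ ?_ ?_ ?_
  · refine Eventually.of_forall fun i =>
      (Antitone.measurable fun s t hst => ?_).aestronglyMeasurable
    exact measureReal_mono fun x hx => hst.trans_lt hx
  · filter_upwards [(hμ _ MeasurableSet.univ).eventually (gt_mem_nhds (lt_add_one _))] with i hi
    filter_upwards [ae_restrict_mem measurableSet_Ioi] with t ht
    by_cases htB : t ≤ B
    · rw [Set.indicator_of_mem (show t ∈ Set.Ioc 0 B from ⟨ht, htB⟩),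
        Real.norm_of_nonneg measureReal_nonneg]
      exact (measureReal_mono (Set.subset_univ _)).trans hi.le
    · have hempty : {x | t < g x} = ∅ :=
        Set.eq_empty_of_forall_notMem fun x hx => htB ((le_of_lt hx).trans (hgB x))
      rw [Set.indicator_of_notMem fun htIoc => htB htIoc.2]
      simp [hempty]
  · exact (integrableOn_const measure_Ioc_lt_top.ne).restrict.integrable_indicator measurableSet_Ioc
  · exact ae_of_all _ fun t => hμ _ (measurableSet_lt measurable_const hg)

theorem tendsto_integral_of_tendsto_measureReal_of_abs_le
    (hμ : ∀ A, MeasurableSet A → Tendsto (fun i => (μ i).real A) l (𝓝 (ν.real A)))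
    {g : X → ℝ} (hg : Measurable g) {B : ℝ} (hgB : ∀ x, |g x| ≤ B) :
    Tendsto (fun i => ∫ x, g x ∂μ i) l (𝓝 (∫ x, g x ∂ν)) := by
  have hshift := tendsto_integral_of_tendsto_measureReal_of_nonneg hμ (hg.add_const B)
    (fun x => show 0 ≤ g x + B by linarith [neg_abs_le (g x), hgB x])
    (fun x => show g x + B ≤ B + B by linarith [le_abs_self (g x), hgB x])
  have integral_add_const (ρ : Measure X) [IsFiniteMeasure ρ] :
      ∫ x, g x + B ∂ρ = ∫ x, g x ∂ρ + ρ.real Set.univ * B := by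
    rw [integral_add (hg.integrable_of_abs_le hgB) (integrable_const B), integral_const,
      smul_eq_mul]
  simp only [integral_add_const] at hshift
  simpa using hshift.sub ((hμ _ MeasurableSet.univ).mul_const B)

end SetwiseConvergence

theorem tendsto_integral_abs_of_tendsto_measureReal {X : Type*} [MeasurableSpace X]
    {μ : ℕ → Measure X} {ν : Measure X} [∀ n, IsFiniteMeasure (μ n)] [IsFiniteMeasure ν]
    (hμ : ∀ A, MeasurableSet A → Tendsto (fun n => (μ n).real A) atTop (𝓝 (ν.real A)))
    {h : ℕ → X → ℝ} (hh : ∀ n, Measurable (h n)) {C : ℝ} (hC : ∀ n x, |h n x| ≤ C)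
    (h0 : ∀ x, Tendsto (h · x) atTop (𝓝 0)) :
    Tendsto (fun n => ∫ x, |h n x| ∂μ n) atTop (𝓝 0) := by
  set H : ℕ → X → ℝ := fun K x => ⨆ m, |h (K + m) x|
  have hH_meas (K : ℕ) : Measurable (H K) := Measurable.iSup fun m => (hh _).abs
  have hH_bdd (K : ℕ) (x : X) : |H K x| ≤ C := by
    rw [abs_of_nonneg (Real.iSup_nonneg fun m => abs_nonneg _)]
    exact ciSup_le fun m => hC _ x
  refine tendsto_zero_of_le_of_tendsto_of_tendsto (fun n => integral_nonneg fun x => abs_nonneg _)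
    (fun K n hKn => ?_)
    (fun K => tendsto_integral_of_tendsto_measureReal_of_abs_le hμ (hH_meas K) (hH_bdd K)) ?_
  · exact integral_mono ((hh n).abs.integrable_of_abs_le fun x => by simpa using hC n x)
      ((hH_meas K).integrable_of_abs_le (hH_bdd K))
      fun x => abs_le_iSup_abs_add (fun m => hC m x) hKn
  · simpa using tendsto_integral_of_dominated_convergence (fun _ => C)
      (fun K => (hH_meas K).aestronglyMeasurable) (integrable_const C)
      (fun K => ae_of_all _ (hH_bdd K))
      (ae_of_all _ fun x => tendsto_iSup_abs_add_of_tendsto_zero (h0 x))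

/-- dominated convergence under setwise convergence of probability
measures, with pointwise convergent uniformly bounded measurable integrands. -/
theorem stmt_1
    {X : Type*} [MeasurableSpace X]
    (μ : ℕ → Measure X) (μlim : Measure X)
    [∀ n, IsProbabilityMeasure (μ n)] [IsProbabilityMeasure μlim]
    (hsetwise : ∀ A : Set X, MeasurableSet A →
      Tendsto (fun n => (μ n A).toReal) atTop (𝓝 ((μlim A).toReal)))
    (f : ℕ → X → ℝ) (flim : X → ℝ)
    (hmeas : ∀ n, Measurable (f n))
    (C : ℝ) (hbdd : ∀ n x, |f n x| ≤ C)
    (hpt : ∀ x, Tendsto (fun n => f n x) atTop (𝓝 (flim x))) :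
    Tendsto (fun n => ∫ x, f n x ∂(μ n)) atTop (𝓝 (∫ x, flim x ∂μlim)) := by
  have hflim_meas : Measurable flim :=
    measurable_of_tendsto_metrizable hmeas (tendsto_pi_nhds.2 hpt)
  have hflim_bdd (x : X) : |flim x| ≤ C :=
    le_of_tendsto (hpt x).abs (Eventually.of_forall fun n => hbdd n x)
  have hdist : Tendsto (fun n => ∫ x, |f n x - flim x| ∂μ n) atTop (𝓝 0) :=
    tendsto_integral_abs_of_tendsto_measureReal hsetwise (fun n => (hmeas n).sub hflim_meas)
      (fun n x => (abs_sub _ _).trans (add_le_add (hbdd n x) (hflim_bdd x)))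
      (fun x => by simpa using (hpt x).sub_const (flim x))
  have hgap : Tendsto (fun n => ∫ x, f n x ∂μ n - ∫ x, flim x ∂μ n) atTop (𝓝 0) := by
    refine squeeze_zero_norm (fun n => ?_) hdist
    rw [← integral_sub ((hmeas n).integrable_of_abs_le (hbdd n))
      (hflim_meas.integrable_of_abs_le hflim_bdd)]
    exact norm_integral_le_integral_norm _
  simpa using hgap.add
    (tendsto_integral_of_tendsto_measureReal_of_abs_le hsetwise hflim_meas hflim_bdd)
end

section
/- Let X = ℝ, let c(x) = min(|x|, 1), let x₀ = 0, and consider the deterministic dynamics x_{t+1} = x_t for the true model and x_{t+1} = x_t + 1/n for the n-th approximate model. Then the infinite-horizon average cost limsup_{N→∞} (1/N) Σ_{t=0}^{N-1} c(x_t) equals 0 for the true model and equals 1 for every approximate model n ≥ 1; in particular the average cost is not continuous even though the one-step kernels δ_{x+1/n} converge weakly to δ_x uniformly and continuously in x. -/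
/-! The average costs are Cesàro means of convergent sequences: along the n-th model the cost
`c (t / n)` equals `1` as soon as `t ≥ n`, so its averages tend to `1`, while the true model
incurs cost `c 0 = 0` at every step. -/

open MeasureTheory Filter Topology Finset

theorem Filter.Tendsto.limsup_cesaro_eq {u : ℕ → ℝ} {l : ℝ} (h : Tendsto u atTop (𝓝 l)) :
    atTop.limsup (fun N : ℕ => (1 / (N : ℝ)) * ∑ t ∈ range N, u t) = l := by
  simpa only [one_div] using h.cesaro.limsup_eq

theorem tendsto_min_abs_one_atTop : Tendsto (fun x : ℝ => min |x| 1) atTop (𝓝 1) := by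
  refine tendsto_const_nhds.congr' ?_
  filter_upwards [eventually_ge_atTop 1] with x hx
  rw [abs_of_nonneg (by linarith), min_eq_right hx]

theorem tendsto_natCast_div_atTop {n : ℕ} (hn : 1 ≤ n) :
    Tendsto (fun t : ℕ => (t : ℝ) / n) atTop atTop :=
  tendsto_natCast_atTop_atTop.atTop_div_const (by exact_mod_cast hn)

theorem tendsto_integral_dirac {α : Type*} {l : Filter α} {g : ℝ → ℝ} (hg : Continuous g)
    {ys : α → ℝ} {x : ℝ} (hys : Tendsto ys l (𝓝 x)) :
    Tendsto (fun a => ∫ y, g y ∂(Measure.dirac (ys a))) l (𝓝 (∫ y, g y ∂(Measure.dirac x))) := by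
  simp only [integral_dirac]
  exact (hg.tendsto x).comp hys

/-- with cost c(x) = min(|x|,1), the true model (state stays at 0)
has average cost 0 while the n-th approximate model (state x_t = t/n) has
average cost 1 for every n ≥ 1; moreover the one-step dynamics converge
continuously (the states x + 1/n converge to x, uniformly and continuously in x),
so the average cost is not continuous under weak convergence of kernels. -/
theorem stmt_2 (c : ℝ → ℝ) (hc : ∀ x, c x = min |x| 1) :
    (Filter.atTop.limsup
        (fun N : ℕ => (1 / (N : ℝ)) * ∑ t ∈ Finset.range N, c 0) = 0) ∧
    (∀ n : ℕ, 1 ≤ n →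
      Filter.atTop.limsup
        (fun N : ℕ => (1 / (N : ℝ)) * ∑ t ∈ Finset.range N, c ((t : ℝ) / n)) = 1) ∧
    (∀ x : ℝ, ∀ xs : ℕ → ℝ, Tendsto xs atTop (𝓝 x) →
      ∀ g : ℝ → ℝ, Continuous g → (∃ M, ∀ y, |g y| ≤ M) →
        Tendsto (fun n : ℕ => ∫ y, g y ∂(Measure.dirac (xs n + 1 / ((n : ℝ) + 1))))
          atTop (𝓝 (∫ y, g y ∂(Measure.dirac x)))) := by
  have hc_eq : c = fun x => min |x| 1 := funext hc
  subst hc_eq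
  refine ⟨?_, fun n hn => ?_, fun x xs hxs g hg _ => ?_⟩
  · simp
  · exact (tendsto_min_abs_one_atTop.comp (tendsto_natCast_div_atTop hn)).limsup_cesaro_eq
  · refine tendsto_integral_dirac hg ?_
    simpa using hxs.add tendsto_one_div_add_atTop_nhds_zero_nat
end

section
/- Let X be a measurable space, U a set, c : X × U → ℝ bounded, and T(·|x,u) a family of probability measures on X. Suppose there is β < 1 such that ‖T(·|x,u) − T(·|x',u')‖_TV ≤ 2β for all (x,u), (x',u'). Then the Bellman-type operator (Tv)(x) = inf_u [c(x,u) + ∫ v(y) T(dy|x,u)] maps bounded functions to bounded functions and satisfies sp(Tv − Tw) ≤ β·sp(v − w) for all bounded measurable v, w, where sp(f) = sup f − inf f. -/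
/-!
Shifting `f` by the midpoint of its range and dividing by half its span produces a test
function bounded by `1`, so `|∫ f dμ - ∫ f dν| ≤ ‖μ - ν‖_TV · sp(f) / 2`. If `u` is
`ε`-optimal for `w` at `x` and `u'` is `ε`-optimal for `v` at `x'`, then
`(Tv - Tw)(x) - (Tv - Tw)(x') ≤ ∫ (v - w) dT(·|x,u) - ∫ (v - w) dT(·|x',u') + 2ε`,
and the first inequality bounds the right-hand side by `β · sp(v - w) + 2ε`.
-/

open MeasureTheory Filter Topology

/-- Total variation distance between two measures, as the supremum of
|∫ f dμ − ∫ f dν| over measurable f with ‖f‖_∞ ≤ 1. -/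
noncomputable def tvDist {X : Type*} [MeasurableSpace X] (μ ν : Measure X) : ℝ :=
  sSup {d | ∃ f : X → ℝ, Measurable f ∧ (∀ x, |f x| ≤ 1) ∧
    d = |(∫ x, f x ∂μ) - ∫ x, f x ∂ν|}

/-- Span seminorm of a real function: sup v − inf v (via sSup/sInf of range). -/
noncomputable def spanSemi {X : Type*} (v : X → ℝ) : ℝ :=
  sSup (Set.range v) - sInf (Set.range v)

/-- The Bellman-type operator (Tv)(x) = inf_u [c(x,u) + ∫ v dT(·|x,u)]. -/
noncomputable def bellman {X U : Type*} [MeasurableSpace X]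
    (c : X → U → ℝ) (T : X → U → Measure X) (v : X → ℝ) (x : X) : ℝ :=
  ⨅ u : U, (c x u + ∫ y, v y ∂(T x u))

open Set

section SpanSemi

variable {X : Type*}

lemma bddAbove_range_of_forall_abs_le {f : X → ℝ} {C : ℝ} (h : ∀ x, |f x| ≤ C) :
    BddAbove (range f) :=
  ⟨C, by rintro _ ⟨x, rfl⟩; exact (abs_le.mp (h x)).2⟩

lemma bddBelow_range_of_forall_abs_le {f : X → ℝ} {C : ℝ} (h : ∀ x, |f x| ≤ C) :
    BddBelow (range f) :=
  ⟨-C, by rintro _ ⟨x, rfl⟩; exact (abs_le.mp (h x)).1⟩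

lemma abs_sub_midpoint_le_spanSemi {f : X → ℝ} (ha : BddAbove (range f))
    (hb : BddBelow (range f)) (x : X) :
    |f x - (sSup (range f) + sInf (range f)) / 2| ≤ spanSemi f / 2 := by
  have hsup : f x ≤ sSup (range f) := le_csSup ha ⟨x, rfl⟩
  have hinf : sInf (range f) ≤ f x := csInf_le hb ⟨x, rfl⟩
  rw [spanSemi, abs_le]
  constructor <;> linarith

lemma spanSemi_le_of_forall_sub_le [Nonempty X] {f : X → ℝ} {B : ℝ}
    (h : ∀ x x', f x - f x' ≤ B) : spanSemi f ≤ B := by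
  rw [spanSemi, sub_le_iff_le_add]
  refine csSup_le (range_nonempty f) ?_
  rintro _ ⟨x, rfl⟩
  rw [← sub_le_iff_le_add']
  refine le_csInf (range_nonempty f) ?_
  rintro _ ⟨x', rfl⟩
  linarith [h x x']

end SpanSemi

section TotalVariation

variable {X : Type*} [MeasurableSpace X] {μ ν : Measure X}
  [IsProbabilityMeasure μ] [IsProbabilityMeasure ν]

lemma abs_integral_le_of_forall_abs_le {f : X → ℝ} {C : ℝ} (h : ∀ x, |f x| ≤ C) :
    |∫ x, f x ∂μ| ≤ C := by
  simpa using norm_integral_le_of_norm_le_const (μ := μ)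
    (ae_of_all _ fun x => (Real.norm_eq_abs _).trans_le (h x))

lemma integrable_of_forall_abs_le {f : X → ℝ} (hf : Measurable f) {C : ℝ}
    (h : ∀ x, |f x| ≤ C) : Integrable f μ :=
  .of_bound hf.aestronglyMeasurable C (ae_of_all _ fun x => (Real.norm_eq_abs _).trans_le (h x))

lemma abs_integral_sub_integral_le_tvDist {g : X → ℝ} (hg : Measurable g)
    (hg1 : ∀ x, |g x| ≤ 1) : |(∫ x, g x ∂μ) - ∫ x, g x ∂ν| ≤ tvDist μ ν := by
  refine le_csSup ⟨2, ?_⟩ ⟨g, hg, hg1, rfl⟩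
  rintro _ ⟨g, -, hg1, rfl⟩
  have hμ := abs_integral_le_of_forall_abs_le (μ := μ) hg1
  have hν := abs_integral_le_of_forall_abs_le (μ := ν) hg1
  linarith [abs_sub (∫ x, g x ∂μ) (∫ x, g x ∂ν)]

lemma abs_integral_sub_integral_le_tvDist_mul {f : X → ℝ} (hf : Measurable f) {a r : ℝ}
    (hr : ∀ x, |f x - a| ≤ r) :
    |(∫ x, f x ∂μ) - ∫ x, f x ∂ν| ≤ tvDist μ ν * r := by
  obtain ⟨x₀⟩ := nonempty_of_isProbabilityMeasure μ
  rcases ((abs_nonneg _).trans (hr x₀)).eq_or_lt with rfl | hr0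
  · have hfa : f = fun _ => a := funext fun x => sub_eq_zero.mp (abs_nonpos_iff.mp (hr x))
    simp [hfa]
  have hfC : ∀ x, |f x| ≤ r + |a| :=
    fun x => by linarith [abs_sub_abs_le_abs_sub (f x) a, hr x]
  have hint (ρ : Measure X) [IsProbabilityMeasure ρ] :
      ∫ x, f x - a ∂ρ = (∫ x, f x ∂ρ) - a := by
    rw [integral_sub (integrable_of_forall_abs_le hf hfC) (integrable_const a)]
    simp
  have hg1 : ∀ x, |(f x - a) / r| ≤ 1 := fun x => by
    rw [abs_div, abs_of_pos hr0, div_le_one hr0]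
    exact hr x
  have htv := abs_integral_sub_integral_le_tvDist (μ := μ) (ν := ν)
    (g := fun x => (f x - a) / r) ((hf.sub measurable_const).div_const r) hg1
  rwa [integral_div, integral_div, ← sub_div, abs_div, abs_of_pos hr0, div_le_iff₀ hr0, hint μ,
    hint ν, sub_sub_sub_cancel_right] at htv

lemma abs_integral_sub_integral_le_tvDist_mul_spanSemi {f : X → ℝ} (hf : Measurable f)
    (ha : BddAbove (range f)) (hb : BddBelow (range f)) :
    |(∫ x, f x ∂μ) - ∫ x, f x ∂ν| ≤ tvDist μ ν * (spanSemi f / 2) :=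
  abs_integral_sub_integral_le_tvDist_mul hf (abs_sub_midpoint_le_spanSemi ha hb)

end TotalVariation

section Bellman

variable {X U : Type*} [MeasurableSpace X] {c : X → U → ℝ} {Mc : ℝ}
  {T : X → U → Measure X} [∀ x u, IsProbabilityMeasure (T x u)]

lemma bddBelow_range_bellman_summand (hc : ∀ x u, |c x u| ≤ Mc) {v : X → ℝ} {C : ℝ}
    (hv : ∀ x, |v x| ≤ C) (x : X) :
    BddBelow (range fun u => c x u + ∫ y, v y ∂(T x u)) := by
  refine ⟨-(Mc + C), ?_⟩
  rintro _ ⟨u, rfl⟩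
  have hvu := abs_integral_le_of_forall_abs_le (μ := T x u) hv
  linarith [(abs_le.mp (hc x u)).1, (abs_le.mp hvu).1]

lemma abs_bellman_le [Nonempty U] (hc : ∀ x u, |c x u| ≤ Mc) {v : X → ℝ} {C : ℝ}
    (hv : ∀ x, |v x| ≤ C) (x : X) : |bellman c T v x| ≤ Mc + C := by
  have hcu := fun u => abs_le.mp (hc x u)
  have hvu := fun u => abs_le.mp (abs_integral_le_of_forall_abs_le (μ := T x u) hv)
  obtain ⟨u⟩ := ‹Nonempty U›
  rw [abs_le]
  constructor
  · exact le_ciInf fun u => by linarith [(hcu u).1, (hvu u).1]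
  · exact (ciInf_le (bddBelow_range_bellman_summand hc hv x) u).trans
      (by linarith [(hcu u).2, (hvu u).2])

lemma exists_bellman_sub_bellman_le [Nonempty U] (hc : ∀ x u, |c x u| ≤ Mc) {v w : X → ℝ}
    {C : ℝ} (hv : ∀ x, |v x| ≤ C) (x : X) {ε : ℝ} (hε : 0 < ε) :
    ∃ u, bellman c T v x - bellman c T w x ≤
      (∫ y, v y ∂(T x u)) - (∫ y, w y ∂(T x u)) + ε := by
  obtain ⟨u, hu⟩ : ∃ u, c x u + ∫ y, w y ∂(T x u) < bellman c T w x + ε :=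
    exists_lt_of_ciInf_lt (lt_add_of_pos_right _ hε)
  have hvu : bellman c T v x ≤ c x u + ∫ y, v y ∂(T x u) :=
    ciInf_le (bddBelow_range_bellman_summand hc hv x) u
  exact ⟨u, by linarith⟩

lemma bellman_sub_bellman_sub_le [Nonempty U] (hc : ∀ x u, |c x u| ≤ Mc) {β : ℝ}
    (hTV : ∀ x u x' u', tvDist (T x u) (T x' u') ≤ 2 * β) {v w : X → ℝ}
    (hvm : Measurable v) (hwm : Measurable w) {Cv Cw : ℝ} (hv : ∀ x, |v x| ≤ Cv)
    (hw : ∀ x, |w x| ≤ Cw) (x x' : X) :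
    (bellman c T v x - bellman c T w x) - (bellman c T v x' - bellman c T w x') ≤
      β * spanSemi (fun y => v y - w y) := by
  have hd : ∀ y, |v y - w y| ≤ Cv + Cw :=
    fun y => (abs_sub _ _).trans (add_le_add (hv y) (hw y))
  have hda := bddAbove_range_of_forall_abs_le hd
  have hdb := bddBelow_range_of_forall_abs_le hd
  have hspan : 0 ≤ spanSemi (fun y => v y - w y) / 2 :=
    (abs_nonneg _).trans (abs_sub_midpoint_le_spanSemi hda hdb x)
  have hint (x : X) (u : U) :
      ∫ y, v y - w y ∂(T x u) = (∫ y, v y ∂(T x u)) - ∫ y, w y ∂(T x u) :=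
    integral_sub (integrable_of_forall_abs_le hvm hv) (integrable_of_forall_abs_le hwm hw)
  refine le_of_forall_pos_le_add fun ε hε => ?_
  obtain ⟨u, hu⟩ := exists_bellman_sub_bellman_le (T := T) hc hv x (w := w) (half_pos hε)
  obtain ⟨u', hu'⟩ := exists_bellman_sub_bellman_le (T := T) hc hw x' (w := v) (half_pos hε)
  have htv := (abs_integral_sub_integral_le_tvDist_mul_spanSemi (μ := T x u) (ν := T x' u')
    (f := fun y => v y - w y) (hvm.sub hwm) hda hdb).trans
    (mul_le_mul_of_nonneg_right (hTV x u x' u') hspan)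
  rw [hint, hint] at htv
  linarith [(abs_le.mp htv).2]

end Bellman

theorem stmt_12_general
    {X U : Type*} [MeasurableSpace X] [Nonempty X] [Nonempty U]
    (c : X → U → ℝ) (Mc : ℝ) (hc : ∀ x u, |c x u| ≤ Mc)
    (T : X → U → Measure X) (hTprob : ∀ x u, IsProbabilityMeasure (T x u))
    (β : ℝ)
    (hTV : ∀ x u x' u', tvDist (T x u) (T x' u') ≤ 2 * β) :
    (∀ v : X → ℝ, Measurable v → (∃ C, ∀ x, |v x| ≤ C) →
      ∃ K, ∀ x, |bellman c T v x| ≤ K) ∧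
    (∀ v w : X → ℝ, Measurable v → Measurable w →
      (∃ C, ∀ x, |v x| ≤ C) → (∃ C, ∀ x, |w x| ≤ C) →
      spanSemi (fun x => bellman c T v x - bellman c T w x) ≤
        β * spanSemi (fun x => v x - w x)) := by
  refine ⟨fun v _ ⟨C, hv⟩ => ⟨Mc + C, abs_bellman_le (T := T) hc hv⟩, ?_⟩
  rintro v w hvm hwm ⟨Cv, hv⟩ ⟨Cw, hw⟩
  exact spanSemi_le_of_forall_sub_le (bellman_sub_bellman_sub_le hc hTV hvm hwm hv hw)

/-- under the uniform TV bound ‖T(·|x,u) − T(·|x',u')‖_TV ≤ 2β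
with β < 1, the Bellman operator maps bounded functions to bounded functions
and is a span-contraction with modulus β. -/
theorem stmt_12
    {X U : Type*} [MeasurableSpace X] [Nonempty X] [Nonempty U]
    (c : X → U → ℝ) (Mc : ℝ) (hc : ∀ x u, |c x u| ≤ Mc)
    (T : X → U → Measure X) (hTprob : ∀ x u, IsProbabilityMeasure (T x u))
    (β : ℝ) (hβ0 : 0 ≤ β) (hβ1 : β < 1)
    (hTV : ∀ x u x' u', tvDist (T x u) (T x' u') ≤ 2 * β) :
    (∀ v : X → ℝ, Measurable v → (∃ C, ∀ x, |v x| ≤ C) →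
      ∃ K, ∀ x, |bellman c T v x| ≤ K) ∧
    (∀ v w : X → ℝ, Measurable v → Measurable w →
      (∃ C, ∀ x, |v x| ≤ C) → (∃ C, ∀ x, |w x| ≤ C) →
      spanSemi (fun x => bellman c T v x - bellman c T w x) ≤
        β * spanSemi (fun x => v x - w x)) :=
  stmt_12_general c Mc hc T hTprob β hTV
end

section
/- Suppose there exists a positive integer t and a measure μ on X with μ(X) < 2 such that Tᵗ(·|x,γ) ≤ μ(·) for all x and all stationary policies γ. Then there exists β < 1 with ‖Tᵗ(·|x,γ) − Tᵗ(·|x',γ)‖_TV ≤ 2β for all x, x', γ. -/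
open MeasureTheory Filter Topology

/-- t-step transition measures of a Markov kernel P, started at x. -/
noncomputable def iterK {X : Type*} [MeasurableSpace X]
    (P : X → Measure X) : ℕ → X → Measure X
  | 0, x => Measure.dirac x
  | (t + 1), x => (iterK P t x).bind P

/-!
Split a test function `f` with `|f| ≤ 1` as `f = f⁺ - f⁻`. For `P, Q ≤ μ`,
`∫ f dP - ∫ f dQ ≤ ∫ f⁺ dP + ∫ f⁻ dQ ≤ ∫ f⁺ dμ + ∫ f⁻ dμ = ∫ |f| dμ ≤ μ(X)`,
so any two measures dominated by `μ` are at total variation distance at most `μ(X)`;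
with `μ(X) < 2` this gives `β = μ(X) / 2 < 1`.
-/

section DominatedMeasures

variable {X : Type*} [MeasurableSpace X] {μ P Q : Measure X} [IsFiniteMeasure μ]

lemma integral_sub_integral_le_of_le (hP : P ≤ μ) (hQ : Q ≤ μ) {f : X → ℝ}
    (hf : Measurable f) (hf_le : ∀ x, |f x| ≤ 1) :
    ∫ x, f x ∂P - ∫ x, f x ∂Q ≤ μ.real Set.univ := by
  have hfμ : Integrable f μ := .of_bound hf.aestronglyMeasurable 1 (.of_forall hf_le)
  have hpos : Integrable (fun x => (f x)⁺) μ := hfμ.pos_part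
  have hneg : Integrable (fun x => (f x)⁻) μ := hfμ.neg_part
  have hP_le : ∫ x, f x ∂P ≤ ∫ x, (f x)⁺ ∂μ :=
    calc ∫ x, f x ∂P ≤ ∫ x, (f x)⁺ ∂P :=
          integral_mono (hfμ.mono_measure hP) (hpos.mono_measure hP) fun x => le_posPart _
      _ ≤ ∫ x, (f x)⁺ ∂μ := integral_mono_measure hP (.of_forall fun x => posPart_nonneg _) hpos
  have hQ_le : -∫ x, f x ∂Q ≤ ∫ x, (f x)⁻ ∂μ :=
    calc -∫ x, f x ∂Q = ∫ x, -f x ∂Q := (integral_neg _).symm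
      _ ≤ ∫ x, (f x)⁻ ∂Q :=
          integral_mono (hfμ.mono_measure hQ).neg (hneg.mono_measure hQ) fun x => neg_le_negPart _
      _ ≤ ∫ x, (f x)⁻ ∂μ := integral_mono_measure hQ (.of_forall fun x => negPart_nonneg _) hneg
  have habs : ∫ x, (f x)⁺ ∂μ + ∫ x, (f x)⁻ ∂μ ≤ μ.real Set.univ :=
    calc ∫ x, (f x)⁺ ∂μ + ∫ x, (f x)⁻ ∂μ = ∫ x, |f x| ∂μ := by
          simp_rw [← integral_add hpos hneg, posPart_add_negPart]
      _ ≤ ∫ _, 1 ∂μ := integral_mono hfμ.abs (integrable_const 1) hf_le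
      _ = μ.real Set.univ := by simp
  linarith

lemma tvDist_le_of_le (hP : P ≤ μ) (hQ : Q ≤ μ) : tvDist P Q ≤ μ.real Set.univ := by
  refine Real.sSup_le ?_ measureReal_nonneg
  rintro _ ⟨f, hf, hf_le, rfl⟩
  exact abs_sub_le_iff.2 ⟨integral_sub_integral_le_of_le hP hQ hf hf_le,
    integral_sub_integral_le_of_le hQ hP hf hf_le⟩

end DominatedMeasures

theorem stmt_14_general
    {X U : Type*} [MeasurableSpace X]
    (T : X → U → Measure X)
    (t : ℕ) (μ : Measure X) (hμfin : μ Set.univ < 2)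
    (hdom : ∀ (γ : X → U) (x : X) (B : Set X), MeasurableSet B →
      iterK (fun y => T y (γ y)) t x B ≤ μ B) :
    ∃ β : ℝ, β < 1 ∧ ∀ (γ : X → U) (x x' : X),
      tvDist (iterK (fun y => T y (γ y)) t x) (iterK (fun y => T y (γ y)) t x')
        ≤ 2 * β := by
  have : IsFiniteMeasure μ := ⟨hμfin.trans ENNReal.ofNat_lt_top⟩
  have hμ_lt : μ.real Set.univ < 2 :=
    (ENNReal.toReal_lt_toReal (measure_ne_top μ _) ENNReal.ofNat_ne_top).2 hμfin
  refine ⟨μ.real Set.univ / 2, by linarith, fun γ x x' => ?_⟩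
  have hle : ∀ y, iterK (fun z => T z (γ z)) t y ≤ μ := fun y =>
    Measure.le_iff.2 (hdom γ y)
  linarith [tvDist_le_of_le (hle x) (hle x')]

/-- if there is a measure μ with μ(X) < 2 dominating all t-step
transition probabilities Tᵗ(·|x,γ), then there exists β < 1 with
‖Tᵗ(·|x,γ) − Tᵗ(·|x',γ)‖_TV ≤ 2β for all x, x', γ. -/
theorem stmt_14
    {X U : Type*} [MeasurableSpace X]
    (T : X → U → Measure X) (hTprob : ∀ x u, IsProbabilityMeasure (T x u))
    (t : ℕ) (ht : 0 < t) (μ : Measure X) (hμfin : μ Set.univ < 2)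
    (hdom : ∀ (γ : X → U) (x : X) (B : Set X), MeasurableSet B →
      iterK (fun y => T y (γ y)) t x B ≤ μ B) :
    ∃ β : ℝ, β < 1 ∧ ∀ (γ : X → U) (x x' : X),
      tvDist (iterK (fun y => T y (γ y)) t x) (iterK (fun y => T y (γ y)) t x')
        ≤ 2 * β :=
  stmt_14_general T t μ hμfin hdom
end

section
/- Let P be a Markov kernel on X and suppose for two stationary cost evaluations: π is the unique invariant probability measure of P, {πₙ} are invariant probability measures of kernels Pₙ, the family {πₙ} is tight, Pₙ(·|xₙ) → P(·|x) weakly for every sequence xₙ → x, and P(·|x) is weakly continuous in x. Then πₙ → π weakly. -/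
/-!
Tightness and Prokhorov's theorem make `{πₙ}` relatively compact in the weak topology, which is
metrizable, so it suffices that every subsequential limit `ρ` of `πₙ` is invariant for `P`; then
`ρ = π` by uniqueness. For bounded continuous `g`, the functions `x ↦ ∫ g dPₙ(·|x)` converge
continuously, hence uniformly on compacts, to the continuous `x ↦ ∫ g dP(·|x)`. By tightness the
integrals of these functions against `πₙ` converge to their integral against `ρ`; invariance of
`πₙ` turns the left side into `∫ g dπₙ → ∫ g dρ`, so `∫ g d(ρP) = ∫ g dρ`.
-/

open MeasureTheory Filter Topology ProbabilityTheory
open scoped BoundedContinuousFunction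

section ContinuousConvergence

variable {X E : Type*} [TopologicalSpace X]

theorem tendsto_extend_of_strictMono {m : ℕ → ℕ} (hm : StrictMono m) {y : ℕ → X} {x : X}
    (hy : Tendsto y atTop (𝓝 x)) :
    Tendsto (Function.extend m y fun _ ↦ x) atTop (𝓝 x) := by
  intro V hV
  obtain ⟨N, hN⟩ := eventually_atTop.1 (hy hV)
  refine mem_map.2 (mem_atTop_sets.2 ⟨m N, fun n hn ↦ ?_⟩)
  by_cases hrange : ∃ k, m k = n
  · obtain ⟨k, rfl⟩ := hrange
    simpa only [Set.mem_preimage, hm.injective.extend_apply] using hN k (hm.le_iff_le.1 hn)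
  · simpa only [Set.mem_preimage, Function.extend_apply' _ _ _ hrange] using mem_of_mem_nhds hV

theorem tendsto_prod_nhds_of_forall_seq [FirstCountableTopology X] [TopologicalSpace E]
    {F : ℕ → X → E} {f : X → E}
    (h : ∀ x (xs : ℕ → X), Tendsto xs atTop (𝓝 x) → Tendsto (fun n ↦ F n (xs n)) atTop (𝓝 (f x)))
    (x : X) : Tendsto (fun p : ℕ × X ↦ F p.1 p.2) (atTop ×ˢ 𝓝 x) (𝓝 (f x)) := by
  refine tendsto_iff_seq_tendsto.2 fun u hu ↦ tendsto_of_subseq_tendsto fun ns hns ↦ ?_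
  have hu' := hu.comp hns
  rw [tendsto_prod_iff'] at hu'
  obtain ⟨φ, hφ, hmono⟩ := strictMono_subseq_of_tendsto_atTop hu'.1
  -- along a strictly increasing first coordinate, the sequence is a subsequence of a sequence
  -- of the form `(n, xs n)`
  have := (h x _ (tendsto_extend_of_strictMono hmono (hu'.2.comp hφ.tendsto_atTop))).comp
    hmono.tendsto_atTop
  exact ⟨φ, this.congr fun k ↦ congrArg (F _) (hmono.injective.extend_apply _ _ k)⟩

theorem tendstoLocallyUniformly_of_tendsto_prod_nhds [UniformSpace E] {ι : Type*} {l : Filter ι}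
    {F : ι → X → E} {f : X → E} (hf : Continuous f)
    (h : ∀ x, Tendsto (fun p : ι × X ↦ F p.1 p.2) (l ×ˢ 𝓝 x) (𝓝 (f x))) :
    TendstoLocallyUniformly F f l :=
  tendstoLocallyUniformly_iff_forall_tendsto.2 fun x ↦
    (((hf.tendsto x).comp tendsto_snd).prodMk_nhds (h x)).mono_right (nhds_le_uniformity _)

end ContinuousConvergence

section Integral

variable {X : Type*} [MeasurableSpace X]

theorem norm_integral_le_add_mul_measureReal_compl {μ : Measure X} [IsProbabilityMeasure μ]
    {K : Set X} (hK : MeasurableSet K) {g : X → ℝ} {δ C : ℝ}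
    (hδ : 0 ≤ δ) (hgK : ∀ x ∈ K, ‖g x‖ ≤ δ) (hgC : ∀ x, ‖g x‖ ≤ C) :
    ‖∫ x, g x ∂μ‖ ≤ δ + C * μ.real Kᶜ := by
  have hbound : ∀ x, ‖g x‖ ≤ δ + Kᶜ.indicator (fun _ ↦ C) x := by
    intro x
    by_cases hx : x ∈ K
    · simpa [hx] using hgK x hx
    · simpa [hx] using (hgC x).trans (le_add_of_nonneg_left hδ)
  calc ‖∫ x, g x ∂μ‖ ≤ ∫ x, ‖g x‖ ∂μ := norm_integral_le_integral_norm _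
    _ ≤ ∫ x, (δ + Kᶜ.indicator (fun _ ↦ C) x) ∂μ :=
      integral_mono_of_nonneg (ae_of_all _ fun _ ↦ norm_nonneg _)
        ((integrable_const δ).add ((integrable_const C).indicator hK.compl)) (ae_of_all _ hbound)
    _ = δ + C * μ.real Kᶜ := by
      rw [integral_add (integrable_const δ) ((integrable_const C).indicator hK.compl),
        integral_indicator_const _ hK.compl]
      simp [mul_comm]

theorem integral_bind_kernel {Y E : Type*} [MeasurableSpace Y] [NormedAddCommGroup E]
    [NormedSpace ℝ E] {μ : Measure X} [SFinite μ] {κ : Kernel X Y} [IsSFiniteKernel κ]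
    {f : Y → E} (hf : Integrable f (κ ∘ₘ μ)) :
    ∫ y, f y ∂(κ ∘ₘ μ) = ∫ x, ∫ y, f y ∂κ x ∂μ := by
  have h := Kernel.integral_comp (η := κ) (κ := Kernel.const Unit μ) (a := ())
    (by simpa [Kernel.comp_apply] using hf)
  simpa [Kernel.comp_apply] using h

variable [TopologicalSpace X]

theorem isCompact_closure_range_of_forall_measureReal_compl_le {ι : Type*}
    {ν : ι → ProbabilityMeasure X} [T2Space X] [BorelSpace X]
    (h : ∀ ε > (0 : ℝ), ∃ K, IsCompact K ∧ ∀ i, (ν i : Measure X).real Kᶜ ≤ ε) :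
    IsCompact (closure (Set.range ν)) := by
  refine isCompact_closure_of_isTightMeasureSet <|
    isTightMeasureSet_iff_exists_isCompact_measure_compl_le.2 fun ε hε ↦ ?_
  obtain ⟨K, hK, hKν⟩ := h (min ε 1).toReal
    (ENNReal.toReal_pos (lt_min hε one_pos).ne' (min_lt_of_right_lt ENNReal.one_lt_top).ne)
  refine ⟨K, hK, ?_⟩
  rintro _ ⟨_, ⟨i, rfl⟩, rfl⟩
  calc (ν i : Measure X) Kᶜ = ENNReal.ofReal ((ν i : Measure X).real Kᶜ) :=
        (ofReal_measureReal (measure_ne_top _ _)).symm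
    _ ≤ ENNReal.ofReal (min ε 1).toReal := ENNReal.ofReal_le_ofReal (hKν i)
    _ = min ε 1 := ENNReal.ofReal_toReal (min_lt_of_right_lt ENNReal.one_lt_top).ne
    _ ≤ ε := min_le_left _ _

theorem tendsto_integral_of_tendstoLocallyUniformly [T2Space X] [OpensMeasurableSpace X]
    {ν : ℕ → ProbabilityMeasure X} {ρ : ProbabilityMeasure X} (hν : Tendsto ν atTop (𝓝 ρ))
    (htight : ∀ ε > (0 : ℝ), ∃ K, IsCompact K ∧ ∀ k, (ν k : Measure X).real Kᶜ ≤ ε)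
    {F : ℕ → X → ℝ} {f : X →ᵇ ℝ} {C : ℝ} (hFmeas : ∀ k, AEStronglyMeasurable (F k) (ν k))
    (hFC : ∀ k x, ‖F k x‖ ≤ C) (hFf : TendstoLocallyUniformly F f atTop) :
    Tendsto (fun k ↦ ∫ x, F k x ∂(ν k : Measure X)) atTop (𝓝 (∫ x, f x ∂(ρ : Measure X))) := by
  have hweak := ProbabilityMeasure.tendsto_iff_forall_integral_tendsto.1 hν f
  suffices Tendsto (fun k ↦ ∫ x, F k x ∂(ν k : Measure X) - ∫ x, f x ∂(ν k : Measure X))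
      atTop (𝓝 0) by simpa using this.add hweak
  refine Metric.tendsto_nhds.2 fun ε hε ↦ ?_
  set D := |C| + ‖f‖
  obtain ⟨K, hK, hKν⟩ := htight (ε / (2 * (D + 1))) (by positivity)
  have hunif := (tendstoLocallyUniformlyOn_iff_tendstoUniformlyOn_of_compact hK).1
    hFf.tendstoLocallyUniformlyOn
  filter_upwards [Metric.tendstoUniformlyOn_iff.1 hunif (ε / 4) (by positivity)] with k hk
  have hFint : Integrable (F k) (ν k) := .of_bound (hFmeas k) C (ae_of_all _ (hFC k))
  rw [dist_zero_right, ← integral_sub hFint (f.integrable _)]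
  have hbound : ∀ x, ‖F k x - f x‖ ≤ D := fun x ↦ (norm_sub_le _ _).trans <|
    add_le_add ((hFC k x).trans (le_abs_self C)) (f.norm_coe_le_norm x)
  calc ‖∫ x, F k x - f x ∂(ν k : Measure X)‖ ≤ ε / 4 + D * (ν k : Measure X).real Kᶜ :=
        norm_integral_le_add_mul_measureReal_compl hK.measurableSet (by positivity)
          (fun x hx ↦ by rw [← dist_eq_norm, dist_comm]; exact (hk x hx).le) hbound
    _ ≤ ε / 4 + D * (ε / (2 * (D + 1))) := by gcongr; exact hKν k
    _ < ε := by
      have : D * (ε / (2 * (D + 1))) ≤ ε / 2 := by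
        rw [mul_div_assoc', div_le_div_iff₀ (by positivity) two_pos]
        nlinarith
      linarith

theorem comp_eq_self_of_tendsto [T2Space X] [HasOuterApproxClosed X] [BorelSpace X]
    {κ : Kernel X X} [IsMarkovKernel κ] {η : ℕ → Kernel X X} [∀ k, IsMarkovKernel (η k)]
    {ν : ℕ → ProbabilityMeasure X} {ρ : ProbabilityMeasure X} (hν : Tendsto ν atTop (𝓝 ρ))
    (htight : ∀ ε > (0 : ℝ), ∃ K, IsCompact K ∧ ∀ k, (ν k : Measure X).real Kᶜ ≤ ε)
    (hinv : ∀ k, η k ∘ₘ (ν k : Measure X) = ν k)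
    (hκ : ∀ g : X →ᵇ ℝ, Continuous fun x ↦ ∫ y, g y ∂κ x)
    (hηκ : ∀ g : X →ᵇ ℝ,
      TendstoLocallyUniformly (fun k x ↦ ∫ y, g y ∂η k x) (fun x ↦ ∫ y, g y ∂κ x) atTop) :
    κ ∘ₘ (ρ : Measure X) = ρ := by
  refine ext_of_forall_integral_eq_of_IsFiniteMeasure fun g ↦ ?_
  let f : X →ᵇ ℝ := .ofNormedAddCommGroup _ (hκ g) ‖g‖ fun x ↦ g.norm_integral_le_norm (μ := κ x)
  rw [integral_bind_kernel (g.integrable _)]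
  refine tendsto_nhds_unique (tendsto_integral_of_tendstoLocallyUniformly (f := f) hν htight
    (fun k ↦ (g.continuous.stronglyMeasurable.integral_kernel (κ := η k)).aestronglyMeasurable)
    (fun k x ↦ g.norm_integral_le_norm (μ := η k x)) (hηκ g)) ?_
  refine (ProbabilityMeasure.tendsto_iff_forall_integral_tendsto.1 hν g).congr fun k ↦ ?_
  conv_lhs => rw [← hinv k]
  exact integral_bind_kernel (g.integrable _)

end Integral

theorem stmt_19_general
    {X : Type*} [MetricSpace X] [TopologicalSpace.SeparableSpace X]
    [MeasurableSpace X] [BorelSpace X]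
    (P : X → Measure X) (hPmeas : Measurable P)
    (hPprob : ∀ x, IsProbabilityMeasure (P x))
    (Pn : ℕ → X → Measure X) (hPnmeas : ∀ n, Measurable (Pn n))
    (hPnprob : ∀ n x, IsProbabilityMeasure (Pn n x))
    (π : Measure X) [IsProbabilityMeasure π]
    (hπuniq : ∀ ρ : Measure X, IsProbabilityMeasure ρ → ρ.bind P = ρ → ρ = π)
    (πn : ℕ → Measure X) (hπnprob : ∀ n, IsProbabilityMeasure (πn n))
    (hπninv : ∀ n, (πn n).bind (Pn n) = πn n)
    (htight : ∀ ε > (0 : ℝ), ∃ K : Set X, IsCompact K ∧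
      ∀ n, (πn n Kᶜ).toReal ≤ ε)
    (hcontweak : ∀ (x : X) (xs : ℕ → X), Tendsto xs atTop (𝓝 x) →
      ∀ g : X → ℝ, Continuous g → (∃ M, ∀ y, |g y| ≤ M) →
        Tendsto (fun n => ∫ y, g y ∂(Pn n (xs n))) atTop
          (𝓝 (∫ y, g y ∂(P x))))
    (hPweakcont : ∀ (x : X) (xs : ℕ → X), Tendsto xs atTop (𝓝 x) →
      ∀ g : X → ℝ, Continuous g → (∃ M, ∀ y, |g y| ≤ M) →
        Tendsto (fun n => ∫ y, g y ∂(P (xs n))) atTop (𝓝 (∫ y, g y ∂(P x)))) :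
    ∀ g : X → ℝ, Continuous g → (∃ M, ∀ y, |g y| ≤ M) →
      Tendsto (fun n => ∫ y, g y ∂(πn n)) atTop (𝓝 (∫ y, g y ∂π)) := by
  let κ : Kernel X X := ⟨P, hPmeas⟩
  let η (n : ℕ) : Kernel X X := ⟨Pn n, hPnmeas n⟩
  have : IsMarkovKernel κ := ⟨hPprob⟩
  have : ∀ n, IsMarkovKernel (η n) := fun n ↦ ⟨hPnprob n⟩
  let ν (n : ℕ) : ProbabilityMeasure X := ⟨πn n, hπnprob n⟩
  have hbdd (g : X →ᵇ ℝ) : ∃ M, ∀ y, |g y| ≤ M := ⟨‖g‖, fun y ↦ g.norm_coe_le_norm y⟩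
  have hκ (g : X →ᵇ ℝ) : Continuous fun x ↦ ∫ y, g y ∂κ x :=
    SeqContinuous.continuous fun _ _ hxs ↦ hPweakcont _ _ hxs g g.continuous (hbdd g)
  have hηκ (g : X →ᵇ ℝ) : ∀ x, Tendsto (fun p : ℕ × X ↦ ∫ y, g y ∂η p.1 p.2) (atTop ×ˢ 𝓝 x)
      (𝓝 (∫ y, g y ∂κ x)) :=
    tendsto_prod_nhds_of_forall_seq (F := fun n x ↦ ∫ y, g y ∂η n x) fun _ _ hxs ↦
      hcontweak _ _ hxs g g.continuous (hbdd g)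
  have hν : Tendsto ν atTop (𝓝 ⟨π, inferInstance⟩) := by
    have hcompact := isCompact_closure_range_of_forall_measureReal_compl_le (ν := ν) htight
    refine hcompact.tendsto_nhds_of_unique_mapClusterPt (.of_forall fun n ↦ subset_closure ⟨n, rfl⟩)
      fun ρ _ hρ ↦ Subtype.ext ?_
    obtain ⟨m, hm, hνm⟩ := hρ.tendsto_subseq
    have hinv : κ ∘ₘ (ρ : Measure X) = ρ := by
      refine comp_eq_self_of_tendsto (η := fun k ↦ η (m k)) hνm (fun ε hε ↦ ?_)
        (fun k ↦ hπninv (m k)) hκ fun g ↦ ?_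
      · obtain ⟨K, hK, hKν⟩ := htight ε hε
        exact ⟨K, hK, fun k ↦ hKν (m k)⟩
      · exact tendstoLocallyUniformly_of_tendsto_prod_nhds (hκ g) fun x ↦
          (hηκ g x).comp (hm.tendsto_atTop.prodMap tendsto_id)
    exact hπuniq ρ ρ.2 hinv
  rintro g hg ⟨M, hM⟩
  exact ProbabilityMeasure.tendsto_iff_forall_integral_tendsto.1 hν
    (.ofNormedAddCommGroup g hg M hM)

/-- on a Polish space, if π is the unique invariant probability
measure of P, the πₙ are invariant for Pₙ and tight, Pₙ(·|xₙ) → P(·|x) weakly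
along every convergent sequence xₙ → x, and P is weakly continuous, then
πₙ → π weakly. -/
theorem stmt_19
    {X : Type*} [MetricSpace X] [CompleteSpace X] [TopologicalSpace.SeparableSpace X]
    [MeasurableSpace X] [BorelSpace X]
    (P : X → Measure X) (hPmeas : Measurable P)
    (hPprob : ∀ x, IsProbabilityMeasure (P x))
    (Pn : ℕ → X → Measure X) (hPnmeas : ∀ n, Measurable (Pn n))
    (hPnprob : ∀ n x, IsProbabilityMeasure (Pn n x))
    (π : Measure X) [IsProbabilityMeasure π] (hπinv : π.bind P = π)
    (hπuniq : ∀ ρ : Measure X, IsProbabilityMeasure ρ → ρ.bind P = ρ → ρ = π)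
    (πn : ℕ → Measure X) (hπnprob : ∀ n, IsProbabilityMeasure (πn n))
    (hπninv : ∀ n, (πn n).bind (Pn n) = πn n)
    (htight : ∀ ε > (0 : ℝ), ∃ K : Set X, IsCompact K ∧
      ∀ n, (πn n Kᶜ).toReal ≤ ε)
    (hcontweak : ∀ (x : X) (xs : ℕ → X), Tendsto xs atTop (𝓝 x) →
      ∀ g : X → ℝ, Continuous g → (∃ M, ∀ y, |g y| ≤ M) →
        Tendsto (fun n => ∫ y, g y ∂(Pn n (xs n))) atTop
          (𝓝 (∫ y, g y ∂(P x))))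
    (hPweakcont : ∀ (x : X) (xs : ℕ → X), Tendsto xs atTop (𝓝 x) →
      ∀ g : X → ℝ, Continuous g → (∃ M, ∀ y, |g y| ≤ M) →
        Tendsto (fun n => ∫ y, g y ∂(P (xs n))) atTop (𝓝 (∫ y, g y ∂(P x)))) :
    ∀ g : X → ℝ, Continuous g → (∃ M, ∀ y, |g y| ≤ M) →
      Tendsto (fun n => ∫ y, g y ∂(πn n)) atTop (𝓝 (∫ y, g y ∂π)) :=
  stmt_19_general P hPmeas hPprob Pn hPnmeas hPnprob π hπuniq πn hπnprob hπninv htight hcontweak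
    hPweakcont
end
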